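/- arXiv:2011.14884 — 4 statements merged into one kernel-verified Lean document; each statement's English description precedes it below -/
import Mathlib

section
/- Let d ≥ 1 and k ≥ 1 be integers and set P_k(x) = (1+|x|²)^{k/2} on ℝ^d. Then for every multi-index α with |α| ≥ 1, the partial derivative ∂^α (P_k^{−1}) is bounded on ℝ^d, with sup_{x ∈ ℝ^d} |∂^α (1+|x|²)^{−k/2}| ≤ (4 k |α|²)^{|α|}. -/
noncomputable section

/-- Iterated directional (partial) derivative of `g` along the list of directions `l`:
`partialDerivList [v₁, …, v_m] g = ∂_{v_m} ⋯ ∂_{v₁} g`. -/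
def partialDerivList {E F : Type*} [NormedAddCommGroup E] [NormedSpace ℝ E]
    [NormedAddCommGroup F] [NormedSpace ℝ F] : List E → (E → F) → (E → F)
  | [], g => g
  | v :: l, g => partialDerivList l (fun x => fderiv ℝ g x v)

/-!
Every derivative `∂_{v_m} ⋯ ∂_{v_1}` of `(1 + ‖x‖²)^(-s/2)` on a real inner product space is a
finite sum of terms `c (1 + ‖x‖²)^(-s/2 - a) ∏_{u ∈ U} ⟪u, x⟫` with `|U| ≤ a`. Since
`|⟪u, x⟫| ≤ ‖u‖ (1 + ‖x‖²)^(1/2)`, such a term is bounded by its size `|c| ∏_{u ∈ U} ‖u‖`.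
Differentiating a term along `v` (chain rule on the power, product rule on the inner products)
gives terms of total size at most `‖v‖ (s + 2a + |U|)` times its size, and `a` is at most the
number of derivatives already taken. Hence the `m`-th derivative is bounded by
`(∏ ‖v_j‖) (s + 3m)^m`, and `(k + 3m)^m ≤ (4 k m²)^m` for `k, m ≥ 1`.
-/

open scoped RealInnerProductSpace

variable {E : Type*} [NormedAddCommGroup E]

theorem norm_pow_le_rpow_one_add_norm_sq (x : E) (n : ℕ) :
    ‖x‖ ^ n ≤ (1 + ‖x‖ ^ 2) ^ ((n : ℝ) / 2) := by
  have hx : ‖x‖ ≤ √(1 + ‖x‖ ^ 2) := Real.le_sqrt_of_sq_le (by linarith)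
  calc ‖x‖ ^ n ≤ √(1 + ‖x‖ ^ 2) ^ n := pow_le_pow_left₀ (norm_nonneg x) hx n
    _ = (1 + ‖x‖ ^ 2) ^ ((n : ℝ) / 2) := by
      rw [Real.sqrt_eq_rpow, ← Real.rpow_natCast, ← Real.rpow_mul (by positivity)]
      ring_nf

structure WeightTerm (E : Type*) where
  coeff : ℝ
  order : ℕ
  dirs : Multiset E

namespace WeightTerm

def size (t : WeightTerm E) : ℝ := |t.coeff| * (t.dirs.map (‖·‖)).prod

theorem size_nonneg (t : WeightTerm E) : 0 ≤ t.size :=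
  mul_nonneg (abs_nonneg _) (Multiset.prod_map_nonneg fun _ _ => norm_nonneg _)

end WeightTerm

variable [InnerProductSpace ℝ E]

theorem abs_prod_inner_le (U : Multiset E) (x : E) :
    |(U.map (⟪·, x⟫)).prod| ≤ (U.map (‖·‖)).prod * ‖x‖ ^ U.card := by
  induction U using Multiset.induction_on with
  | empty => simp
  | cons u U ih =>
    simp only [Multiset.map_cons, Multiset.prod_cons, Multiset.card_cons, abs_mul, pow_succ]
    calc |⟪u, x⟫| * |(U.map (⟪·, x⟫)).prod|
        ≤ (‖u‖ * ‖x‖) * ((U.map (‖·‖)).prod * ‖x‖ ^ U.card) :=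
          mul_le_mul (abs_real_inner_le_norm u x) ih (abs_nonneg _) (by positivity)
      _ = ‖u‖ * (U.map (‖·‖)).prod * (‖x‖ ^ U.card * ‖x‖) := by ring

namespace WeightTerm

def eval (s : ℝ) (t : WeightTerm E) (x : E) : ℝ :=
  t.coeff * (1 + ‖x‖ ^ 2) ^ (-s / 2 - t.order) * (t.dirs.map (⟪·, x⟫)).prod

theorem abs_eval_le {s : ℝ} (hs : 0 ≤ s) {t : WeightTerm E} (ht : t.dirs.card ≤ t.order)
    (x : E) : |t.eval s x| ≤ t.size := by
  set w := 1 + ‖x‖ ^ 2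
  have hw : 1 ≤ w := le_add_of_nonneg_right (sq_nonneg _)
  have hexp : -s / 2 - t.order + (t.dirs.card : ℝ) / 2 ≤ 0 := by
    have : (t.dirs.card : ℝ) ≤ t.order := by exact_mod_cast ht
    linarith
  calc |t.eval s x| = |t.coeff| * w ^ (-s / 2 - t.order) * |(t.dirs.map (⟪·, x⟫)).prod| := by
        rw [eval, abs_mul, abs_mul, abs_of_pos (Real.rpow_pos_of_pos (by positivity) _)]
    _ ≤ |t.coeff| * w ^ (-s / 2 - t.order) *
          ((t.dirs.map (‖·‖)).prod * w ^ ((t.dirs.card : ℝ) / 2)) := by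
        gcongr
        exact (abs_prod_inner_le _ x).trans (mul_le_mul_of_nonneg_left
          (norm_pow_le_rpow_one_add_norm_sq x _)
          (Multiset.prod_map_nonneg fun _ _ => norm_nonneg _))
    _ = t.size * w ^ (-s / 2 - t.order + (t.dirs.card : ℝ) / 2) := by
        rw [size, Real.rpow_add (by positivity)]; ring
    _ ≤ t.size :=
        mul_le_of_le_one_right t.size_nonneg (Real.rpow_le_one_of_one_le_of_nonpos hw hexp)

def derivTerms [DecidableEq E] (s : ℝ) (v : E) (t : WeightTerm E) : Multiset (WeightTerm E) :=
  ⟨t.coeff * (-s - 2 * t.order), t.order + 1, v ::ₘ t.dirs⟩ ::ₘ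
    t.dirs.map fun u => ⟨t.coeff * ⟪u, v⟫, t.order, t.dirs.erase u⟩

theorem differentiable_eval (s : ℝ) (t : WeightTerm E) : Differentiable ℝ (t.eval s) := by
  classical
  intro x
  have hprod := (HasFDerivAt.multiset_prod (u := t.dirs) (x := x)
    fun u _ => (innerSL ℝ u).hasFDerivAt).differentiableAt
  have hw : DifferentiableAt ℝ (fun y : E => (1 + ‖y‖ ^ 2) ^ (-s / 2 - t.order)) x :=
    ((differentiableAt_id.norm_sq ℝ).const_add 1).rpow_const (Or.inl (by positivity))
  exact ((differentiableAt_const _).mul hw).mul hprod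

theorem fderiv_eval_apply [DecidableEq E] (s : ℝ) (t : WeightTerm E) (x v : E) :
    fderiv ℝ (t.eval s) x v = ((t.derivTerms s v).map (·.eval s x)).sum := by
  have hw := ((hasStrictFDerivAt_norm_sq x).hasFDerivAt.const_add 1).rpow_const
    (p := -s / 2 - t.order) (Or.inl (by positivity))
  have hprod := HasFDerivAt.multiset_prod (u := t.dirs) (x := x)
    fun u _ => (innerSL ℝ u).hasFDerivAt
  have h : HasFDerivAt (t.eval s) _ x := (hw.const_mul t.coeff).mul hprod
  have hsum (L : Multiset (E →L[ℝ] ℝ)) : L.sum v = (L.map (· v)).sum :=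
    map_multiset_sum (ContinuousLinearMap.apply ℝ ℝ v) L
  have hexp : -s / 2 - ((t.order : ℝ) + 1) = -s / 2 - t.order - 1 := by ring
  rw [h.fderiv, add_comm]
  simp only [derivTerms, eval, Multiset.map_cons, Multiset.sum_cons, Multiset.prod_cons,
    Multiset.map_map, Nat.cast_add, Nat.cast_one, add_apply, smul_apply, smul_eq_mul,
    innerSL_apply_apply, hexp, hsum]
  congr 1
  · rw [real_inner_comm]; ring
  · rw [← Multiset.sum_map_mul_left]
    congr 1
    refine Multiset.map_congr rfl fun u _ => ?_
    simp only [Function.comp_apply, smul_apply, smul_eq_mul, innerSL_apply_apply]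
    ring

theorem sum_size_derivTerms_le [DecidableEq E] {s : ℝ} (hs : 0 ≤ s) (v : E) (t : WeightTerm E) :
    ((t.derivTerms s v).map size).sum ≤ ‖v‖ * (s + 2 * t.order + t.dirs.card) * t.size := by
  have hfirst : |t.coeff * (-s - 2 * t.order)| = |t.coeff| * (s + 2 * t.order) := by
    rw [abs_mul, abs_of_nonpos (a := -s - 2 * (t.order : ℝ)) (by
      linarith [t.order.cast_nonneg (α := ℝ)])]
    ring
  have hrest : ∀ u ∈ t.dirs, size ⟨t.coeff * ⟪u, v⟫, t.order, t.dirs.erase u⟩ ≤ ‖v‖ * t.size := by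
    intro u hu
    calc |t.coeff * ⟪u, v⟫| * ((t.dirs.erase u).map (‖·‖)).prod
        ≤ |t.coeff| * (‖u‖ * ‖v‖) * ((t.dirs.erase u).map (‖·‖)).prod := by
          rw [abs_mul]; gcongr
          · exact Multiset.prod_map_nonneg fun _ _ => norm_nonneg _
          · exact abs_real_inner_le_norm u v
      _ = ‖v‖ * t.size := by
          rw [size, ← Multiset.prod_map_erase hu]; ring
  calc ((t.derivTerms s v).map size).sum
      = |t.coeff * (-s - 2 * t.order)| * (‖v‖ * (t.dirs.map (‖·‖)).prod) +
          (t.dirs.map fun u => size ⟨t.coeff * ⟪u, v⟫, t.order, t.dirs.erase u⟩).sum := by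
        simp [derivTerms, size, Function.comp_def]
    _ ≤ |t.coeff| * (s + 2 * t.order) * (‖v‖ * (t.dirs.map (‖·‖)).prod) +
          t.dirs.card • (‖v‖ * t.size) := by
        rw [hfirst, ← Multiset.card_map (fun u => size ⟨t.coeff * ⟪u, v⟫, t.order, t.dirs.erase u⟩)]
        gcongr
        exact Multiset.sum_le_card_nsmul _ _ (by simpa using hrest)
    _ = ‖v‖ * (s + 2 * t.order + t.dirs.card) * t.size := by
        rw [nsmul_eq_mul, size]; ring

theorem bounds_of_mem_derivTerms [DecidableEq E] {s : ℝ} {v : E} {t τ : WeightTerm E}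
    (hτ : τ ∈ t.derivTerms s v) (ht : t.dirs.card ≤ t.order) :
    τ.dirs.card ≤ τ.order ∧ τ.order ≤ t.order + 1 := by
  rcases Multiset.mem_cons.1 hτ with rfl | hτ
  · simpa using ht
  · obtain ⟨u, hu, rfl⟩ := Multiset.mem_map.1 hτ
    exact ⟨Multiset.card_erase_le.trans ht, Nat.le_succ _⟩

def sumEval (s : ℝ) (S : Multiset (WeightTerm E)) (x : E) : ℝ := (S.map (·.eval s x)).sum

theorem sumEval_zero (s : ℝ) : sumEval s (0 : Multiset (WeightTerm E)) = 0 := by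
  funext x; simp [sumEval]

theorem sumEval_cons (s : ℝ) (t : WeightTerm E) (S : Multiset (WeightTerm E)) :
    sumEval s (t ::ₘ S) = t.eval s + sumEval s S := by
  funext x; simp [sumEval]

theorem differentiable_sumEval (s : ℝ) (S : Multiset (WeightTerm E)) :
    Differentiable ℝ (sumEval s S) := by
  induction S using Multiset.induction_on with
  | empty => rw [sumEval_zero]; exact differentiable_const (0 : ℝ)
  | cons t S ih => rw [sumEval_cons]; exact (differentiable_eval s t).add ih

theorem fderiv_sumEval_apply [DecidableEq E] (s : ℝ) (S : Multiset (WeightTerm E)) (x v : E) :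
    fderiv ℝ (sumEval s S) x v = sumEval s (S.bind (derivTerms s v)) x := by
  induction S using Multiset.induction_on with
  | empty => simp [sumEval_zero]
  | cons t S ih =>
    rw [sumEval_cons, fderiv_add (differentiable_eval s t x) (differentiable_sumEval s S x),
      add_apply, fderiv_eval_apply, ih, Multiset.cons_bind]
    simp [sumEval]

end WeightTerm

open WeightTerm

def HasTermExpansion (s : ℝ) (n : ℕ) (M : ℝ) (f : E → ℝ) : Prop :=
  ∃ S : Multiset (WeightTerm E), (∀ t ∈ S, t.dirs.card ≤ t.order ∧ t.order ≤ n) ∧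
    (S.map size).sum ≤ M ∧ f = sumEval s S

namespace HasTermExpansion

variable {s M : ℝ} {n : ℕ} {f : E → ℝ}

theorem nonneg (h : HasTermExpansion s n M f) : 0 ≤ M := by
  obtain ⟨S, -, hM, -⟩ := h
  refine le_trans (Multiset.sum_nonneg fun r hr => ?_) hM
  obtain ⟨t, -, rfl⟩ := Multiset.mem_map.1 hr
  exact t.size_nonneg

theorem mono {M' : ℝ} (h : HasTermExpansion s n M f) (hM : M ≤ M') :
    HasTermExpansion s n M' f := by
  obtain ⟨S, hS, hSM, rfl⟩ := h
  exact ⟨S, hS, hSM.trans hM, rfl⟩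

theorem abs_le (hs : 0 ≤ s) (h : HasTermExpansion s n M f) (x : E) : |f x| ≤ M := by
  obtain ⟨S, hS, hM, rfl⟩ := h
  calc |sumEval s S x| ≤ (S.map fun t => |t.eval s x|).sum := by
        simpa [sumEval, Multiset.map_map, Function.comp_def] using
          Multiset.abs_sum_le_sum_abs (s := S.map (·.eval s x))
    _ ≤ (S.map size).sum :=
        Multiset.sum_map_le_sum_map _ _ fun t ht => abs_eval_le hs (hS t ht).1 x
    _ ≤ M := hM

theorem fderiv_apply (hs : 0 ≤ s) (h : HasTermExpansion s n M f) (v : E) :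
    HasTermExpansion s (n + 1) (‖v‖ * (s + 3 * n) * M) fun x => fderiv ℝ f x v := by
  classical
  obtain ⟨S, hS, hM, rfl⟩ := h
  refine ⟨S.bind (derivTerms s v), fun τ hτ => ?_, ?_,
    funext fun x => fderiv_sumEval_apply s S x v⟩
  · obtain ⟨t, ht, hτ⟩ := Multiset.mem_bind.1 hτ
    have := bounds_of_mem_derivTerms hτ (hS t ht).1
    exact ⟨this.1, this.2.trans (by have := (hS t ht).2; omega)⟩
  · have hstep : ∀ t ∈ S, ((t.derivTerms s v).map size).sum ≤ ‖v‖ * (s + 3 * n) * t.size := by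
      intro t ht
      have hcard : (t.dirs.card : ℝ) ≤ t.order := by exact_mod_cast (hS t ht).1
      have horder : (t.order : ℝ) ≤ n := by exact_mod_cast (hS t ht).2
      refine (sum_size_derivTerms_le hs v t).trans ?_
      gcongr ‖v‖ * ?_ * _
      · exact t.size_nonneg
      · linarith
    calc ((S.bind (derivTerms s v)).map size).sum
        = (S.map fun t => ((t.derivTerms s v).map size).sum).sum := by
          rw [Multiset.map_bind, Multiset.sum_bind]
      _ ≤ (S.map fun t => ‖v‖ * (s + 3 * n) * t.size).sum :=
          Multiset.sum_map_le_sum_map _ _ hstep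
      _ ≤ ‖v‖ * (s + 3 * n) * M := by
          rw [Multiset.sum_map_mul_left]; gcongr

theorem partialDerivList (hs : 0 ≤ s) (h : HasTermExpansion s n M f) (l : List E) :
    HasTermExpansion s (n + l.length)
      (M * (l.map (‖·‖)).prod * (s + 3 * (n + l.length : ℝ)) ^ l.length)
      (_root_.partialDerivList l f) := by
  induction l generalizing n M f with
  | nil => simpa [_root_.partialDerivList] using h
  | cons v l ih =>
    rw [List.length_cons, show n + (l.length + 1) = n + 1 + l.length by omega]
    refine (ih (h.fderiv_apply hs v)).mono ?_
    set B := s + 3 * ((n + 1 : ℕ) + l.length : ℝ)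
    have hB : s + 3 * n ≤ B := by
      simp only [B]; push_cast; linarith [l.length.cast_nonneg (α := ℝ)]
    have hlB : 0 ≤ M * (‖v‖ * (l.map (‖·‖)).prod) * B ^ l.length :=
      mul_nonneg (mul_nonneg h.nonneg (mul_nonneg (norm_nonneg v) (List.prod_nonneg (by simp))))
        (pow_nonneg (hs.trans (le_add_of_nonneg_right (by positivity))) _)
    calc ‖v‖ * (s + 3 * n) * M * (l.map (‖·‖)).prod * B ^ l.length
        = M * (‖v‖ * (l.map (‖·‖)).prod) * B ^ l.length * (s + 3 * n) := by ring
      _ ≤ M * (‖v‖ * (l.map (‖·‖)).prod) * B ^ l.length * B := mul_le_mul_of_nonneg_left hB hlB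
      _ = M * ((v :: l).map (‖·‖)).prod *
            (s + 3 * (n + (l.length + 1 : ℕ) : ℝ)) ^ (l.length + 1) := by
        simp only [B, List.map_cons, List.prod_cons]; push_cast; ring

end HasTermExpansion

theorem hasTermExpansion_one_add_norm_sq_rpow (s : ℝ) :
    HasTermExpansion s 0 1 fun x : E => (1 + ‖x‖ ^ 2) ^ (-s / 2) :=
  ⟨{⟨1, 0, 0⟩}, by simp, by simp [size], by funext x; simp [sumEval, eval]⟩

theorem abs_partialDerivList_one_add_norm_sq_rpow_le {s : ℝ} (hs : 0 ≤ s) (l : List E) (x : E) :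
    |partialDerivList l (fun y => (1 + ‖y‖ ^ 2) ^ (-s / 2)) x|
      ≤ (l.map (‖·‖)).prod * (s + 3 * l.length) ^ l.length := by
  simpa using ((hasTermExpansion_one_add_norm_sq_rpow s).partialDerivList hs l).abs_le hs x

/-- A multi-index `α` with `|α| = m` is encoded as a list `w` of `m` coordinate directions
(with multiplicity, in any order). -/
theorem partialDeriv_inv_weight_bound_general
    (d k : ℕ) (hk : 1 ≤ k)
    (w : List (Fin d)) (hw : w ≠ []) :
    ∀ x : EuclideanSpace ℝ (Fin d),
      |partialDerivList (w.map fun i => (EuclideanSpace.single i (1 : ℝ)))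
          (fun y : EuclideanSpace ℝ (Fin d) => ((1 : ℝ) + ‖y‖ ^ 2) ^ (-(k : ℝ) / 2)) x|
        ≤ (4 * (k : ℝ) * (w.length : ℝ) ^ 2) ^ w.length := by
  intro x
  have h := abs_partialDerivList_one_add_norm_sq_rpow_le k.cast_nonneg
    (w.map fun i => EuclideanSpace.single i (1 : ℝ)) x
  simp only [List.map_map, Function.comp_def, PiLp.norm_single, norm_one, List.map_const',
    List.prod_replicate, one_pow, one_mul, List.length_map] at h
  refine h.trans (pow_le_pow_left₀ (by positivity) ?_ _)
  have hm : (1 : ℝ) ≤ w.length := by exact_mod_cast List.length_pos_iff.2 hw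
  have hk' : (1 : ℝ) ≤ k := by exact_mod_cast hk
  have hkm : 1 ≤ (k : ℝ) * w.length := one_le_mul_of_one_le_of_one_le hk' hm
  nlinarith

/-- For integers `d ≥ 1`, `k ≥ 1` and `P_k(x) = (1+|x|²)^{k/2}` on `ℝ^d`,
every iterated partial derivative `∂^α (P_k^{−1})` of order `|α| ≥ 1` is bounded, with
`sup_x |∂^α (1+|x|²)^{−k/2}| ≤ (4 k |α|²)^{|α|}`. A multi-index `α` with `|α| = m ≥ 1` is
encoded as a list `w` of `m` coordinate directions (with multiplicity, in any order). -/
theorem partialDeriv_inv_weight_bound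
    (d k : ℕ) (hd : 1 ≤ d) (hk : 1 ≤ k)
    (w : List (Fin d)) (hw : w ≠ []) :
    ∀ x : EuclideanSpace ℝ (Fin d),
      |partialDerivList (w.map fun i => (EuclideanSpace.single i (1 : ℝ)))
          (fun y : EuclideanSpace ℝ (Fin d) => ((1 : ℝ) + ‖y‖ ^ 2) ^ (-(k : ℝ) / 2)) x|
        ≤ (4 * (k : ℝ) * (w.length : ℝ) ^ 2) ^ w.length :=
  partialDeriv_inv_weight_bound_general d k hk w hw
end
end

section
/- Let ν > 0, C₁ > 0, and let f : [0,∞) → ℝ be measurable, nonincreasing, and satisfy f(s) ≥ C₁ (1+s)^{−ν} for all s ≥ 0. For ħ > 0 and j ∈ ℕ define G_j(ħ) = ∫_0^∞ f(ρ²) (ρ²/ħ)^j (j! ħ)^{−1} e^{−ρ²/ħ} ρ dρ. Then for every ħ > 0 and every j ∈ ℕ, G_j(ħ) ≥ (C₁/16) ((j+1/2)ħ + 1)^{−ν}. -/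
/-!
Substituting `t = ρ² / ħ` turns the integral into `½ ∫₀^∞ f(ħt) t^j e^{-t} / j! dt`, an average of
`f(ħ ·)` against the Gamma(`j+1`) density. As `f` is nonincreasing and nonnegative, this is at
least `½ f(ħL) P(T ≤ L)` with `L = j + 1/2` and `T ~ Gamma(j+1)`, and
`P(T ≤ L) = 1 - e^{-L} ∑_{k ≤ j} L^k / k!`. Pairing the term `k = j - i` of this partial sum with
the term `j + 1 + i` of the exponential series, the ratio is at most `((j+1)/L)^{2i+1} ≤ e < 4`,
so the partial sum is at most `4/5 · e^L` and `P(T ≤ L) ≥ 1/5`.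
-/

open MeasureTheory Set Finset Real
open scoped Nat

theorem Nat.factorial_add_two_mul_add_one_le (m i : ℕ) :
    (m + 2 * i + 1)! ≤ (m + i + 1) ^ (2 * i + 1) * m ! := by
  induction i generalizing m with
  | zero => simp [Nat.factorial_succ]
  | succ i ih =>
    have amgm : (m + 2 * i + 3) * (m + 1) ≤ (m + i + 2) ^ 2 := by nlinarith
    calc (m + 2 * (i + 1) + 1)! = (m + 2 * i + 3) * (m + 1 + 2 * i + 1)! := by
          rw [show m + 2 * (i + 1) + 1 = (m + 1 + 2 * i + 1) + 1 by ring, Nat.factorial_succ]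
          ring
      _ ≤ (m + 2 * i + 3) * ((m + 1 + i + 1) ^ (2 * i + 1) * (m + 1)!) :=
          Nat.mul_le_mul_left _ (ih (m + 1))
      _ = (m + 2 * i + 3) * (m + 1) * ((m + i + 2) ^ (2 * i + 1) * m !) := by
          rw [Nat.factorial_succ]; ring
      _ ≤ (m + i + 2) ^ 2 * ((m + i + 2) ^ (2 * i + 1) * m !) := Nat.mul_le_mul_right _ amgm
      _ = (m + (i + 1) + 1) ^ (2 * (i + 1) + 1) * m ! := by ring

theorem add_half_pow_le_exp_one_mul_pow {x : ℝ} (hx : 0 < x) {m : ℕ} (hm : (m : ℝ) ≤ 2 * x) :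
    (x + 1 / 2) ^ m ≤ exp 1 * x ^ m := by
  have hbase : x + 1 / 2 ≤ x * exp (1 / (2 * x)) := by
    calc x + 1 / 2 = x * (1 / (2 * x) + 1) := by field_simp; ring
      _ ≤ x * exp (1 / (2 * x)) := by gcongr; exact add_one_le_exp _
  calc (x + 1 / 2) ^ m ≤ (x * exp (1 / (2 * x))) ^ m := by gcongr
    _ = exp (m * (1 / (2 * x))) * x ^ m := by rw [mul_pow, ← exp_nat_mul]; ring
    _ ≤ exp 1 * x ^ m := by
        gcongr
        rw [mul_one_div, div_le_one (by positivity)]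
        exact hm

theorem pow_div_factorial_le_four_mul (m i : ℕ) :
    (m + i + 1 / 2 : ℝ) ^ m / m ! ≤
      4 * ((m + i + 1 / 2 : ℝ) ^ (m + 2 * i + 1) / (m + 2 * i + 1)!) := by
  set L : ℝ := m + i + 1 / 2 with hLdef
  have hL : 0 < L := by positivity
  have hfact : ((m + 2 * i + 1)! : ℝ) ≤ (L + 1 / 2) ^ (2 * i + 1) * m ! := by
    have := Nat.factorial_add_two_mul_add_one_le m i
    rw [show L + 1 / 2 = ((m + i + 1 : ℕ) : ℝ) by push_cast; ring]
    exact_mod_cast this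
  have hexp : (L + 1 / 2) ^ (2 * i + 1) ≤ exp 1 * L ^ (2 * i + 1) :=
    add_half_pow_le_exp_one_mul_pow hL (by push_cast; linarith [(m.cast_nonneg : (0 : ℝ) ≤ m)])
  have hpow : (L + 1 / 2) ^ (2 * i + 1) ≤ 4 * L ^ (2 * i + 1) :=
    hexp.trans (by gcongr; linarith [exp_one_lt_d9])
  rw [← mul_div_assoc, div_le_div_iff₀ (by positivity) (by positivity)]
  calc L ^ m * (m + 2 * i + 1)! ≤ L ^ m * (4 * L ^ (2 * i + 1) * m !) := by
        gcongr; exact hfact.trans (by gcongr)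
    _ = 4 * L ^ (m + 2 * i + 1) * m ! := by ring

theorem sum_range_pow_div_factorial_le (n : ℕ) :
    ∑ k ∈ range (n + 1), (n + 1 / 2 : ℝ) ^ k / k ! ≤ 4 / 5 * exp (n + 1 / 2) := by
  set L : ℝ := n + 1 / 2
  set g : ℕ → ℝ := fun k ↦ L ^ k / (k ! : ℝ)
  have head_le_tail : ∑ k ∈ range (n + 1), g k ≤ 4 * ∑ i ∈ range (n + 1), g (n + 1 + i) := by
    rw [← sum_range_reflect, mul_sum]
    refine sum_le_sum fun i hi ↦ ?_
    have hin : i ≤ n := Nat.lt_succ_iff.mp (mem_range.mp hi)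
    have := pow_div_factorial_le_four_mul (n - i) i
    rwa [show ((n - i : ℕ) : ℝ) + i + 1 / 2 = L by rw [Nat.cast_sub hin]; ring,
      show n - i + 2 * i + 1 = n + 1 + i by omega] at this
  have head_add_tail : ∑ k ∈ range (n + 1), g k + ∑ i ∈ range (n + 1), g (n + 1 + i) ≤ exp L := by
    rw [← sum_range_add]
    exact sum_le_exp_of_nonneg (by positivity) _
  linarith

theorem hasDerivAt_sum_range_pow_div_factorial (n : ℕ) (t : ℝ) :
    HasDerivAt (fun t : ℝ ↦ ∑ k ∈ range (n + 1), t ^ k / k !) (∑ k ∈ range n, t ^ k / k !) t := by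
  induction n with
  | zero => simpa using hasDerivAt_const t (1 : ℝ)
  | succ n ih =>
    rw [sum_range_succ _ n]
    simp_rw [sum_range_succ _ (n + 1)]
    refine ih.fun_add ((hasDerivAt_pow (n + 1) t).div_const _ |>.congr_deriv ?_)
    rw [Nat.factorial_succ]; push_cast; field_simp

theorem integral_pow_mul_exp_neg_div_factorial (n : ℕ) (x : ℝ) :
    ∫ t in 0..x, t ^ n * exp (-t) / n ! = 1 - exp (-x) * ∑ k ∈ range (n + 1), x ^ k / k ! := by
  have hderiv (t : ℝ) : HasDerivAt (fun t ↦ -(exp (-t) * ∑ k ∈ range (n + 1), t ^ k / k !))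
      (t ^ n * exp (-t) / n !) t := by
    refine (((hasDerivAt_neg t).exp).mul (hasDerivAt_sum_range_pow_div_factorial n t)).neg
      |>.congr_deriv ?_
    rw [sum_range_succ]; ring
  have hsum_zero : ∑ k ∈ range (n + 1), (0 : ℝ) ^ k / k ! = 1 := by simp [sum_range_succ']
  rw [intervalIntegral.integral_eq_sub_of_hasDerivAt (fun t _ ↦ hderiv t)
    (by apply Continuous.intervalIntegrable; fun_prop), hsum_zero, neg_zero, exp_zero]
  ring

theorem one_fifth_le_integral_pow_mul_exp_neg_div_factorial (n : ℕ) :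
    1 / 5 ≤ ∫ t in 0..(n + 1 / 2 : ℝ), t ^ n * exp (-t) / n ! := by
  rw [integral_pow_mul_exp_neg_div_factorial]
  have hhead := mul_le_mul_of_nonneg_left (sum_range_pow_div_factorial_le n)
    (exp_pos (-(n + 1 / 2 : ℝ))).le
  rw [mul_left_comm, ← exp_add, neg_add_cancel, exp_zero] at hhead
  linarith

theorem integrableOn_pow_mul_exp_neg_Ioi (n : ℕ) :
    IntegrableOn (fun t : ℝ ↦ t ^ n * exp (-t)) (Ioi 0) := by
  refine (GammaIntegral_convergent (s := n + 1) (by positivity)).congr_fun (fun t _ ↦ ?_)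
    measurableSet_Ioi
  dsimp only
  rw [add_sub_cancel_right, rpow_natCast, mul_comm]

theorem setIntegral_comp_sq_div_mul_self (g : ℝ → ℝ) {c : ℝ} (hc : 0 < c) :
    ∫ ρ in Ioi 0, g (ρ ^ 2 / c) * ρ = c / 2 * ∫ t in Ioi 0, g t := by
  have hsq := integral_comp_rpow_Ioi (fun y ↦ g (y / c)) two_ne_zero
  have hscale := integral_comp_mul_left_Ioi g 0 (inv_pos.2 hc)
  simp only [mul_zero, inv_inv, smul_eq_mul] at hscale
  simp only [smul_eq_mul] at hsq
  rw [setIntegral_congr_fun measurableSet_Ioi (g := fun ρ ↦ 2 * (g (ρ ^ 2 / c) * ρ))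
    (fun ρ _ ↦ by norm_num [rpow_two]; ring), integral_const_mul] at hsq
  simp only [div_eq_inv_mul _ c] at hsq ⊢
  linarith

theorem mul_intervalIntegral_le_setIntegral_Ioi_mul {f w : ℝ → ℝ} (hf : AntitoneOn f (Ici 0))
    (hf0 : ∀ s, 0 < s → 0 ≤ f s) (hw : IntegrableOn w (Ioi 0)) (hw0 : ∀ t, 0 < t → 0 ≤ w t)
    {x : ℝ} (hx : 0 ≤ x) :
    f x * ∫ t in 0..x, w t ≤ ∫ t in Ioi 0, f t * w t := by
  have hfw : IntegrableOn (fun t ↦ f t * w t) (Ioi 0) := by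
    refine (hw.const_mul (f 0)).mono' ?_ ?_
    · exact (aemeasurable_restrict_of_antitoneOn measurableSet_Ioi
        (hf.mono Ioi_subset_Ici_self)).aestronglyMeasurable.mul hw.aestronglyMeasurable
    · filter_upwards [ae_restrict_mem measurableSet_Ioi] with t (ht : 0 < t)
      rw [norm_mul, Real.norm_of_nonneg (hf0 t ht), Real.norm_of_nonneg (hw0 t ht)]
      gcongr
      · exact hw0 t ht
      · exact hf self_mem_Ici (mem_Ici.2 ht.le) ht.le
  calc f x * ∫ t in 0..x, w t = ∫ t in Ioc 0 x, f x * w t := by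
        rw [intervalIntegral.integral_of_le hx, integral_const_mul]
    _ ≤ ∫ t in Ioc 0 x, f t * w t := by
        refine setIntegral_mono_on ((hw.mono_set Ioc_subset_Ioi_self).const_mul _)
          (hfw.mono_set Ioc_subset_Ioi_self) measurableSet_Ioc fun t ht ↦ ?_
        exact mul_le_mul_of_nonneg_right (hf (mem_Ici.2 ht.1.le) hx ht.2) (hw0 t ht.1)
    _ ≤ ∫ t in Ioi 0, f t * w t := by
        refine setIntegral_mono_set hfw ?_ Ioc_subset_Ioi_self.eventuallyLE
        filter_upwards [ae_restrict_mem measurableSet_Ioi] with t (ht : 0 < t)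
        exact mul_nonneg (hf0 t ht) (hw0 t ht)

theorem setIntegral_toeplitz_weight_eq (f : ℝ → ℝ) {hbar : ℝ} (hbar_pos : 0 < hbar) (j : ℕ) :
    ∫ ρ in Ioi (0 : ℝ), f (ρ ^ 2) * (ρ ^ 2 / hbar) ^ j / ((j ! : ℝ) * hbar) *
        exp (-ρ ^ 2 / hbar) * ρ =
      1 / 2 * ∫ t in Ioi 0, f (hbar * t) * (t ^ j * exp (-t) / j !) := by
  have hsubst := setIntegral_comp_sq_div_mul_self
    (fun t ↦ f (hbar * t) * (t ^ j * exp (-t) / j !) / hbar) hbar_pos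
  rw [integral_div, ← mul_div_assoc, mul_div_right_comm, div_right_comm,
    div_self hbar_pos.ne'] at hsubst
  rw [← hsubst]
  refine integral_congr_ae (Filter.Eventually.of_forall fun ρ ↦ ?_)
  simp only [mul_div_cancel₀ _ hbar_pos.ne', neg_div]
  ring

theorem toeplitz_eigenvalue_lower_bound_general
    (ν C₁ : ℝ) (hC₁ : 0 < C₁)
    (f : ℝ → ℝ)
    (hmono : AntitoneOn f (Set.Ici 0))
    (hlow : ∀ s : ℝ, 0 ≤ s → C₁ * (1 + s) ^ (-ν) ≤ f s) :
    ∀ (hbar : ℝ), 0 < hbar → ∀ j : ℕ,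
      C₁ / 16 * (((j : ℝ) + 1 / 2) * hbar + 1) ^ (-ν) ≤
        ∫ ρ in Set.Ioi (0 : ℝ),
          f (ρ ^ 2) * (ρ ^ 2 / hbar) ^ j / ((j.factorial : ℝ) * hbar) *
            Real.exp (-ρ ^ 2 / hbar) * ρ := by
  intro hbar hbar_pos j
  set L : ℝ := j + 1 / 2
  have hf_nonneg (s : ℝ) (hs : 0 ≤ s) : 0 ≤ f s :=
    (mul_nonneg hC₁.le (rpow_nonneg (by linarith) _)).trans (hlow s hs)
  have hf_scaled : AntitoneOn (fun t ↦ f (hbar * t)) (Ici 0) := fun s hs t ht hst ↦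
    hmono (mem_Ici.2 (mul_nonneg hbar_pos.le hs)) (mem_Ici.2 (mul_nonneg hbar_pos.le ht))
      (by gcongr)
  have hcompare := mul_intervalIntegral_le_setIntegral_Ioi_mul hf_scaled
    (fun s hs ↦ hf_nonneg _ (by positivity))
    ((integrableOn_pow_mul_exp_neg_Ioi j).div_const (j ! : ℝ))
    (fun t ht ↦ by positivity) (x := L) (by positivity)
  have hfL : C₁ * (L * hbar + 1) ^ (-ν) ≤ f (hbar * L) := by
    simpa [add_comm, mul_comm] using hlow (hbar * L) (by positivity)
  calc C₁ / 16 * (L * hbar + 1) ^ (-ν) ≤ C₁ * (L * hbar + 1) ^ (-ν) * (1 / 5) / 2 := by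
        have : 0 ≤ C₁ * (L * hbar + 1) ^ (-ν) := by positivity
        linarith
    _ ≤ f (hbar * L) * (∫ t in 0..L, t ^ j * exp (-t) / j !) / 2 := by
        gcongr
        · exact hf_nonneg _ (by positivity)
        · exact one_fifth_le_integral_pow_mul_exp_neg_div_factorial j
    _ ≤ _ := by
        rw [setIntegral_toeplitz_weight_eq f hbar_pos j]
        linarith

/-- Let `ν > 0`, `C₁ > 0` and let `f : [0,∞) → ℝ` be measurable,
nonincreasing, with `f(s) ≥ C₁ (1+s)^{−ν}`. For `hbar > 0` and `j ∈ ℕ` let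
`G_j(hbar) = ∫_0^∞ f(ρ²) (ρ²/hbar)^j (j! hbar)^{−1} e^{−ρ²/hbar} ρ dρ`. Then
`G_j(hbar) ≥ (C₁/16) ((j+1/2) hbar + 1)^{−ν}`. -/
theorem toeplitz_eigenvalue_lower_bound
    (ν C₁ : ℝ) (hν : 0 < ν) (hC₁ : 0 < C₁)
    (f : ℝ → ℝ)
    (hmeas : AEMeasurable f ((volume : Measure ℝ).restrict (Set.Ici 0)))
    (hmono : AntitoneOn f (Set.Ici 0))
    (hlow : ∀ s : ℝ, 0 ≤ s → C₁ * (1 + s) ^ (-ν) ≤ f s) :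
    ∀ (hbar : ℝ), 0 < hbar → ∀ j : ℕ,
      C₁ / 16 * (((j : ℝ) + 1 / 2) * hbar + 1) ^ (-ν) ≤
        ∫ ρ in Set.Ioi (0 : ℝ),
          f (ρ ^ 2) * (ρ ^ 2 / hbar) ^ j / ((j.factorial : ℝ) * hbar) *
            Real.exp (-ρ ^ 2 / hbar) * ρ :=
  toeplitz_eigenvalue_lower_bound_general ν C₁ hC₁ f hmono hlow
end

section
/- Let 3/2 < ν ≤ 7/2, C₀ > 0, and let f : [0,∞) → ℝ be bounded, continuously differentiable, and satisfy −2C₀(1+s)^{−ν−1} ≤ f'(s) ≤ 0 for all s ≥ 0. For ħ ∈ (0,1] and j ∈ ℕ define G_j(ħ) = ∫_0^∞ f(ρ²) (ρ²/ħ)^j (j! ħ)^{−1} e^{−ρ²/ħ} ρ dρ. Then for every j ∈ ℕ: (i) G_j(ħ) − G_{j+1}(ħ) = −ħ ∫_0^∞ f'(ρ²) (ρ²/ħ)^{j+1} ((j+1)! ħ)^{−1} e^{−ρ²/ħ} ρ dρ; and (ii) 0 ≤ G_j(ħ) − G_{j+1}(ħ) ≤ 8^{ν+1} ħ C₀ (jħ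 + 1/2)^{−(ν+1)}. -/
/-!
Substituting `s = ρ²` turns `G_j(ħ)` into `½ ∫₀^∞ f(s) φ_j(s) ds`, where `φ_j` is the density
of the Gamma law of shape `j + 1` and scale `ħ`. These densities satisfy
`ħ φ_{j+1}' = φ_j − φ_{j+1}`, so integrating by parts against `f` gives (i), and (ii) reduces to
the bound `∫ (1 + s)^{-α} φ_{j+1} ≤ 8^α (jħ + 1/2)^{-α}` for `α = ν + 1`.
For `X = jħ + 1/2 ≤ 8` this holds because `φ_{j+1}` has mass one. Otherwise
`(1 + s)^{-α} ≤ X^{-α} (1 + (X/s)^5)`, the negative moment `∫ (ħ/s)^5 φ_{j+1} = (j-4)!/(j+1)!`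
is explicit, and since `X ≤ (16/15) jħ` it contributes at most `63 ≤ 8^α - 1`.
-/

open MeasureTheory

noncomputable section

open Set Real Filter Topology

lemma rpow_le_one_add_pow {r α : ℝ} {n : ℕ} (hr : 0 ≤ r) (hα : 0 ≤ α) (hαn : α ≤ n) :
    r ^ α ≤ 1 + r ^ n := by
  rcases le_total r 1 with hr1 | hr1
  · linarith [rpow_le_one hr hr1 hα, pow_nonneg hr n]
  · have := rpow_le_rpow_of_exponent_le hr1 hαn
    rw [rpow_natCast] at this
    linarith

lemma one_add_rpow_neg_le {X s α : ℝ} {n : ℕ} (hX : 0 < X) (hs : 0 < s) (hα : 0 ≤ α)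
    (hαn : α ≤ n) : (1 + s) ^ (-α) ≤ X ^ (-α) * (1 + (X / s) ^ n) := by
  have hs1 : 0 < 1 + s := by linarith
  calc (1 + s) ^ (-α) = X ^ (-α) * (X / (1 + s)) ^ α := by
        rw [div_rpow hX.le hs1.le, rpow_neg hX.le, rpow_neg hs1.le]
        field_simp
    _ ≤ X ^ (-α) * (1 + (X / (1 + s)) ^ n) := by
        gcongr
        exact rpow_le_one_add_pow (by positivity) hα hαn
    _ ≤ X ^ (-α) * (1 + (X / s) ^ n) := by
        gcongr
        linarith

lemma integral_comp_sq_mul_Ioi (g : ℝ → ℝ) :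
    ∫ ρ in Ioi 0, g (ρ ^ 2) * ρ = 1 / 2 * ∫ s in Ioi 0, g s := by
  have h := integral_comp_rpow_Ioi_of_pos (g := g) (p := 2) two_pos
  simp only [show (2 : ℝ) - 1 = 1 by norm_num, rpow_one, rpow_two, smul_eq_mul] at h
  rw [← h, ← integral_const_mul]
  congr 1; ext ρ
  ring

/-- The density on `(0, ∞)` of the Gamma law with shape `k + 1` and scale `hbar`. -/
def erlangDensity (hbar : ℝ) (k : ℕ) (s : ℝ) : ℝ :=
  (s / hbar) ^ k / (k.factorial * hbar) * exp (-s / hbar)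

namespace erlangDensity

variable {hbar : ℝ}

lemma nonneg (hbar_pos : 0 < hbar) (k : ℕ) {s : ℝ} (hs : 0 ≤ s) :
    0 ≤ erlangDensity hbar k s := by
  unfold erlangDensity; positivity

@[fun_prop]
lemma continuous (hbar : ℝ) (k : ℕ) : Continuous (erlangDensity hbar k) := by
  unfold erlangDensity; fun_prop

lemma succ_zero (hbar : ℝ) (k : ℕ) : erlangDensity hbar (k + 1) 0 = 0 := by
  simp [erlangDensity]

lemma integral_eq_one (hbar_pos : 0 < hbar) (k : ℕ) :
    ∫ s in Ioi 0, erlangDensity hbar k s = 1 := by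
  have hGamma : ∫ s in Ioi 0, s ^ k * exp (-(hbar⁻¹ * s)) = hbar ^ (k + 1) * k.factorial := by
    have h := integral_rpow_mul_exp_neg_mul_Ioi (a := k + 1) (by positivity) (inv_pos.mpr hbar_pos)
    rw [add_sub_cancel_right, one_div, inv_inv, Gamma_nat_eq_factorial, ← Nat.cast_succ] at h
    simpa only [rpow_natCast] using h
  calc ∫ s in Ioi 0, erlangDensity hbar k s
      = ∫ s in Ioi 0, (k.factorial * hbar ^ (k + 1))⁻¹ * (s ^ k * exp (-(hbar⁻¹ * s))) := by
        congr 1; ext s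
        simp only [erlangDensity, div_pow, pow_succ]
        ring_nf
    _ = 1 := by
        rw [integral_const_mul, hGamma]
        field_simp

lemma integrableOn (hbar_pos : 0 < hbar) (k : ℕ) :
    IntegrableOn (erlangDensity hbar k) (Ioi 0) :=
  .of_integral_ne_zero (by rw [integral_eq_one hbar_pos]; exact one_ne_zero)

lemma hasDerivAt_mul_succ (hbar_ne : hbar ≠ 0) (k : ℕ) (s : ℝ) :
    HasDerivAt (fun t => hbar * erlangDensity hbar (k + 1) t)
      (erlangDensity hbar k s - erlangDensity hbar (k + 1) s) s := by
  have hpow := ((hasDerivAt_id s).div_const hbar).pow (k + 1)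
  have hexp := ((hasDerivAt_id s).neg.div_const hbar).exp
  refine (((hpow.div_const ((k + 1).factorial * hbar)).mul hexp).const_mul hbar).congr_deriv ?_
  simp only [erlangDensity, Nat.factorial_succ, Pi.pow_apply, Pi.neg_apply, id,
    Nat.add_sub_cancel]
  push_cast
  field_simp
  ring

lemma tendsto_atTop_nhds_zero (hbar_pos : 0 < hbar) (k : ℕ) :
    Tendsto (erlangDensity hbar k) atTop (𝓝 0) := by
  have h := ((tendsto_pow_mul_exp_neg_atTop_nhds_zero k).comp
    (tendsto_id.atTop_div_const hbar_pos)).div_const (k.factorial * hbar)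
  rw [zero_div] at h
  refine h.congr fun s => ?_
  simp only [erlangDensity, Function.comp, id, neg_div]
  ring

lemma div_pow_mul_add (hbar_ne : hbar ≠ 0) (k i : ℕ) {s : ℝ} (hs : s ≠ 0) :
    (hbar / s) ^ i * erlangDensity hbar (k + i) s
      = k.factorial / (k + i).factorial * erlangDensity hbar k s := by
  have hk : ((k + i).factorial : ℝ) ≠ 0 := by positivity
  have hk' : (k.factorial : ℝ) ≠ 0 := by positivity
  simp only [erlangDensity, pow_add, div_pow]
  field_simp

lemma integrableOn_bdd_mul {g : ℝ → ℝ} {B : ℝ} (hbar_pos : 0 < hbar)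
    (hg : ContinuousOn g (Ioi 0)) (hgB : ∀ s ∈ Ioi (0 : ℝ), |g s| ≤ B) (k : ℕ) :
    IntegrableOn (fun s => g s * erlangDensity hbar k s) (Ioi 0) :=
  (integrableOn hbar_pos k).bdd_mul (hg.aestronglyMeasurable measurableSet_Ioi)
    ((ae_restrict_iff' measurableSet_Ioi).mpr (.of_forall hgB))

lemma integrableOn_one_add_rpow_neg_mul {α : ℝ} (hbar_pos : 0 < hbar) (hα : 0 ≤ α)
    (k : ℕ) :
    IntegrableOn (fun s => (1 + s) ^ (-α) * erlangDensity hbar k s) (Ioi 0) := by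
  refine integrableOn_bdd_mul (B := 1) hbar_pos ?_ ?_ k
  · exact (continuousOn_const.add continuousOn_id).rpow_const
      fun s (hs : 0 < s) => Or.inl (show (1 : ℝ) + s ≠ 0 by positivity)
  · intro s (hs : 0 < s)
    rw [abs_of_nonneg (by positivity)]
    exact rpow_le_one_of_one_le_of_nonpos (by linarith) (by linarith)

end erlangDensity

lemma integral_comp_sq_mul_erlangDensity (g : ℝ → ℝ) (hbar : ℝ) (k : ℕ) :
    ∫ ρ in Ioi 0,
        g (ρ ^ 2) * (ρ ^ 2 / hbar) ^ k / (k.factorial * hbar) * exp (-ρ ^ 2 / hbar) * ρ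
      = 1 / 2 * ∫ s in Ioi 0, g s * erlangDensity hbar k s := by
  rw [← integral_comp_sq_mul_Ioi]
  congr 1; ext ρ
  simp only [erlangDensity]
  ring

open erlangDensity in
theorem integral_mul_erlangDensity_sub_succ {hbar B B' : ℝ} {f f' : ℝ → ℝ}
    (hbar_pos : 0 < hbar) (hf : ∀ s, 0 ≤ s → HasDerivWithinAt f (f' s) (Ici 0) s)
    (hfB : ∀ s, 0 ≤ s → |f s| ≤ B) (hf'c : ContinuousOn f' (Ioi 0))
    (hf'B : ∀ s ∈ Ioi (0 : ℝ), |f' s| ≤ B') (k : ℕ) :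
    (∫ s in Ioi 0, f s * erlangDensity hbar k s)
        - ∫ s in Ioi 0, f s * erlangDensity hbar (k + 1) s
      = -hbar * ∫ s in Ioi 0, f' s * erlangDensity hbar (k + 1) s := by
  set v : ℝ → ℝ := fun t => hbar * erlangDensity hbar (k + 1) t
  have hfc : ContinuousOn f (Ici 0) := fun s hs => (hf s hs).continuousWithinAt
  have hint : ∀ j, IntegrableOn (fun s => f s * erlangDensity hbar j s) (Ioi 0) :=
    integrableOn_bdd_mul hbar_pos (hfc.mono Ioi_subset_Ici_self) fun s hs => hfB s (le_of_lt hs)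
  have hint' := integrableOn_bdd_mul hbar_pos hf'c hf'B (k + 1)
  have h_zero : Tendsto (f * v) (𝓝[>] 0) (𝓝 0) := by
    have hcont : ContinuousWithinAt (f * v) (Ici 0) 0 :=
      (hfc 0 self_mem_Ici).mul (by fun_prop : Continuous v).continuousWithinAt
    simpa [v, succ_zero] using (hcont.mono Ioi_subset_Ici_self).tendsto
  have h_infty : Tendsto (f * v) atTop (𝓝 0) := by
    have hv : Tendsto v atTop (𝓝 0) := by
      simpa using (tendsto_atTop_nhds_zero hbar_pos (k + 1)).const_mul hbar
    refine isBoundedUnder_le_mul_tendsto_zero (isBoundedUnder_of_eventually_le (a := B) ?_) hv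
    filter_upwards [eventually_ge_atTop 0] with s hs using hfB s hs
  have hibp : ∫ s in Ioi 0, f s * (erlangDensity hbar k s - erlangDensity hbar (k + 1) s)
      = 0 - 0 - ∫ s in Ioi 0, f' s * v s :=
    integral_Ioi_mul_deriv_eq_deriv_mul
      (fun s hs => (hf s (le_of_lt hs)).hasDerivAt (Ici_mem_nhds hs))
      (fun s _ => hasDerivAt_mul_succ hbar_pos.ne' k s)
      (((hint k).sub (hint (k + 1))).congr_fun (fun s _ => (mul_sub _ _ _).symm) measurableSet_Ioi)
      (IntegrableOn.congr_fun (hint'.const_mul hbar) (fun s _ => mul_left_comm _ _ _)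
        measurableSet_Ioi)
      h_zero h_infty
  simp only [v, mul_sub, mul_left_comm _ hbar, integral_const_mul,
    integral_sub (hint k) (hint (k + 1))] at hibp
  linarith

open erlangDensity in
lemma integral_one_add_rpow_neg_mul_erlangDensity_add_five_le {hbar X α : ℝ}
    (hbar_pos : 0 < hbar) (hX : 0 < X) (hα : 0 ≤ α) (hα5 : α ≤ 5) (k : ℕ) :
    ∫ s in Ioi 0, (1 + s) ^ (-α) * erlangDensity hbar (k + 5) s
      ≤ X ^ (-α) * (1 + (X / hbar) ^ 5 * (k.factorial / (k + 5).factorial)) := by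
  set c : ℝ := (X / hbar) ^ 5 * (k.factorial / (k + 5).factorial)
  have hpt : ∀ s ∈ Ioi (0 : ℝ), (1 + s) ^ (-α) * erlangDensity hbar (k + 5) s
      ≤ X ^ (-α) * (erlangDensity hbar (k + 5) s + c * erlangDensity hbar k s) := by
    intro s (hs : 0 < s)
    have hmoment : (X / s) ^ 5 * erlangDensity hbar (k + 5) s = c * erlangDensity hbar k s := by
      rw [show X / s = X / hbar * (hbar / s) by field_simp, mul_pow, mul_assoc,
        div_pow_mul_add hbar_pos.ne' k 5 hs.ne', mul_assoc]
    calc (1 + s) ^ (-α) * erlangDensity hbar (k + 5) s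
        ≤ X ^ (-α) * (1 + (X / s) ^ 5) * erlangDensity hbar (k + 5) s := by
          gcongr
          · exact nonneg hbar_pos _ hs.le
          · exact one_add_rpow_neg_le hX hs hα (by exact_mod_cast hα5)
      _ = X ^ (-α) * (erlangDensity hbar (k + 5) s + c * erlangDensity hbar k s) := by
          rw [← hmoment]; ring
  have hint_lhs := integrableOn_one_add_rpow_neg_mul hbar_pos hα (k + 5)
  have hint_k := integrableOn hbar_pos k
  have hint_k5 := integrableOn hbar_pos (k + 5)
  refine (setIntegral_mono_on hint_lhs ((hint_k5.add (hint_k.const_mul c)).const_mul _)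
    measurableSet_Ioi hpt).trans_eq ?_
  simp only [Pi.add_apply]
  rw [integral_const_mul, integral_add hint_k5 (hint_k.const_mul c), integral_const_mul,
    integral_eq_one hbar_pos, integral_eq_one hbar_pos, mul_one]

open erlangDensity in
theorem integral_one_add_rpow_neg_mul_erlangDensity_le {hbar α : ℝ} (hbar_pos : 0 < hbar)
    (hbar_le : hbar ≤ 1) (hα2 : 2 ≤ α) (hα5 : α ≤ 5) (j : ℕ) :
    ∫ s in Ioi 0, (1 + s) ^ (-α) * erlangDensity hbar (j + 1) s
      ≤ 8 ^ α * (j * hbar + 1 / 2) ^ (-α) := by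
  set X : ℝ := j * hbar + 1 / 2 with hX_def
  have hX : 0 < X := by positivity
  rcases le_or_gt X 8 with hX8 | hX8
  · calc ∫ s in Ioi 0, (1 + s) ^ (-α) * erlangDensity hbar (j + 1) s
        ≤ ∫ s in Ioi 0, erlangDensity hbar (j + 1) s := by
          refine setIntegral_mono_on (integrableOn_one_add_rpow_neg_mul hbar_pos (by linarith) _)
            (integrableOn hbar_pos _) measurableSet_Ioi fun s (hs : 0 < s) => ?_
          exact mul_le_of_le_one_left (nonneg hbar_pos _ hs.le)
            (rpow_le_one_of_one_le_of_nonpos (by linarith) (by linarith))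
      _ = 1 := integral_eq_one hbar_pos _
      _ ≤ (8 / X) ^ α := one_le_rpow ((one_le_div hX).mpr hX8) (by linarith)
      _ = 8 ^ α * X ^ (-α) := by
          rw [div_rpow (by norm_num) hX.le, rpow_neg hX.le, div_eq_mul_inv]
  · have hj : 4 ≤ j := by
      have : (4 : ℝ) ≤ j := by nlinarith [mul_le_of_le_one_right j.cast_nonneg hbar_le]
      exact_mod_cast this
    obtain ⟨k, rfl⟩ := Nat.exists_eq_add_of_le' hj
    have hXk : X / hbar ≤ 16 / 15 * (k + 4) := by
      rw [div_le_iff₀ hbar_pos]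
      push_cast at hX_def
      linarith
    have hfactorial : (k.factorial : ℝ) / (k + 5).factorial
        = 1 / ((k + 1) * (k + 2) * (k + 3) * (k + 4) * (k + 5)) := by
      rw [div_eq_div_iff (by positivity) (by positivity)]
      push_cast [Nat.factorial_succ]
      ring
    have hmoment : (X / hbar) ^ 5 * (k.factorial / (k + 5).factorial) ≤ 63 := by
      have hk : (0 : ℝ) ≤ k := k.cast_nonneg
      rw [hfactorial, mul_one_div, div_le_iff₀ (by positivity)]
      calc (X / hbar) ^ 5 ≤ (16 / 15 * ((k : ℝ) + 4)) ^ 5 := by gcongr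
        _ ≤ 63 * (((k : ℝ) + 1) * (k + 2) * (k + 3) * (k + 4) * (k + 5)) := by
          nlinarith [pow_nonneg hk 2, pow_nonneg hk 3, pow_nonneg hk 4, pow_nonneg hk 5]
    have h64 : (64 : ℝ) ≤ 8 ^ α :=
      calc (64 : ℝ) = 8 ^ (2 : ℝ) := by norm_num
        _ ≤ 8 ^ α := Real.rpow_le_rpow_of_exponent_le (by norm_num) hα2
    calc ∫ s in Ioi 0, (1 + s) ^ (-α) * erlangDensity hbar (k + 4 + 1) s
        ≤ X ^ (-α) * (1 + (X / hbar) ^ 5 * (k.factorial / (k + 5).factorial)) :=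
          integral_one_add_rpow_neg_mul_erlangDensity_add_five_le hbar_pos hX (by linarith) hα5 k
      _ ≤ X ^ (-α) * 8 ^ α := by gcongr; linarith
      _ = 8 ^ α * X ^ (-α) := mul_comm _ _

open erlangDensity in
theorem neg_integral_mul_erlangDensity_le {hbar C α : ℝ} {g : ℝ → ℝ} (hbar_pos : 0 < hbar)
    (hbar_le : hbar ≤ 1) (hα2 : 2 ≤ α) (hα5 : α ≤ 5) (hC : 0 ≤ C) {j : ℕ}
    (hg_int : IntegrableOn (fun s => g s * erlangDensity hbar (j + 1) s) (Ioi 0))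
    (hg : ∀ s ∈ Ioi (0 : ℝ), -(C * (1 + s) ^ (-α)) ≤ g s) :
    -∫ s in Ioi 0, g s * erlangDensity hbar (j + 1) s
      ≤ C * (8 ^ α * (j * hbar + 1 / 2) ^ (-α)) := by
  have hpt : ∀ s ∈ Ioi (0 : ℝ), -(g s * erlangDensity hbar (j + 1) s)
      ≤ C * ((1 + s) ^ (-α) * erlangDensity hbar (j + 1) s) := fun s hs => by
    have := mul_le_mul_of_nonneg_right (hg s hs) (nonneg hbar_pos (j + 1) (le_of_lt hs))
    linarith
  calc -∫ s in Ioi 0, g s * erlangDensity hbar (j + 1) s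
      = ∫ s in Ioi 0, -(g s * erlangDensity hbar (j + 1) s) := (integral_neg _).symm
    _ ≤ ∫ s in Ioi 0, C * ((1 + s) ^ (-α) * erlangDensity hbar (j + 1) s) :=
        setIntegral_mono_on hg_int.neg
          ((integrableOn_one_add_rpow_neg_mul hbar_pos (by linarith) _).const_mul C)
          measurableSet_Ioi hpt
    _ = C * ∫ s in Ioi 0, (1 + s) ^ (-α) * erlangDensity hbar (j + 1) s := integral_const_mul _ _
    _ ≤ C * (8 ^ α * (j * hbar + 1 / 2) ^ (-α)) := by
        gcongr
        exact integral_one_add_rpow_neg_mul_erlangDensity_le hbar_pos hbar_le hα2 hα5 j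

/-- Let `3/2 < ν ≤ 7/2`, `C₀ > 0`, and let `f : [0,∞) → ℝ` be bounded and
continuously differentiable with `−2C₀(1+s)^{−ν−1} ≤ f'(s) ≤ 0`. With
`G_j(hbar) = ∫_0^∞ f(ρ²) (ρ²/hbar)^j (j! hbar)^{−1} e^{−ρ²/hbar} ρ dρ` for `hbar ∈ (0,1]`:
(i) `G_j − G_{j+1} = −hbar ∫_0^∞ f'(ρ²) (ρ²/hbar)^{j+1} ((j+1)! hbar)^{−1} e^{−ρ²/hbar} ρ dρ`;
(ii) `0 ≤ G_j − G_{j+1} ≤ 8^{ν+1} hbar C₀ (j hbar + 1/2)^{−(ν+1)}`. -/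
theorem toeplitz_eigenvalue_difference
    (ν C₀ : ℝ) (hν₁ : 3 / 2 < ν) (hν₂ : ν ≤ 7 / 2) (hC₀ : 0 < C₀)
    (f f' : ℝ → ℝ)
    (hbdd : ∃ B : ℝ, ∀ s : ℝ, 0 ≤ s → |f s| ≤ B)
    (hderiv : ∀ s : ℝ, 0 ≤ s → HasDerivWithinAt f (f' s) (Set.Ici 0) s)
    (hcont : ContinuousOn f' (Set.Ici 0))
    (hlow : ∀ s : ℝ, 0 ≤ s → -2 * C₀ * (1 + s) ^ (-ν - 1) ≤ f' s)
    (hhigh : ∀ s : ℝ, 0 ≤ s → f' s ≤ 0)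
    (G : ℝ → ℕ → ℝ)
    (hG : ∀ (hbar : ℝ) (j : ℕ), G hbar j =
      ∫ ρ in Set.Ioi (0 : ℝ),
        f (ρ ^ 2) * (ρ ^ 2 / hbar) ^ j / ((j.factorial : ℝ) * hbar) *
          Real.exp (-ρ ^ 2 / hbar) * ρ) :
    ∀ (hbar : ℝ), 0 < hbar → hbar ≤ 1 → ∀ j : ℕ,
      (G hbar j - G hbar (j + 1) =
        -hbar * ∫ ρ in Set.Ioi (0 : ℝ),
          f' (ρ ^ 2) * (ρ ^ 2 / hbar) ^ (j + 1) / (((j + 1).factorial : ℝ) * hbar) *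
            Real.exp (-ρ ^ 2 / hbar) * ρ) ∧
      0 ≤ G hbar j - G hbar (j + 1) ∧
      G hbar j - G hbar (j + 1) ≤
        (8 : ℝ) ^ (ν + 1) * hbar * C₀ * ((j : ℝ) * hbar + 1 / 2) ^ (-(ν + 1)) := by
  intro hbar hbar_pos hbar_le j
  obtain ⟨B, hB⟩ := hbdd
  have hG_erlang : ∀ k, G hbar k = 1 / 2 * ∫ s in Ioi 0, f s * erlangDensity hbar k s :=
    fun k => (hG hbar k).trans (integral_comp_sq_mul_erlangDensity f hbar k)
  have hlow' : ∀ s ∈ Ioi (0 : ℝ), -(2 * C₀ * (1 + s) ^ (-(ν + 1))) ≤ f' s := fun s hs => by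
    rw [neg_add', ← neg_mul, ← neg_mul]
    exact hlow s (le_of_lt hs)
  have hf'_abs : ∀ s ∈ Ioi (0 : ℝ), |f' s| ≤ 2 * C₀ := fun s hs => by
    have : (1 + s) ^ (-(ν + 1)) ≤ 1 :=
      rpow_le_one_of_one_le_of_nonpos (by linarith [mem_Ioi.mp hs]) (by linarith)
    rw [abs_of_nonpos (hhigh s (le_of_lt hs))]
    nlinarith [hlow' s hs]
  have hf'c : ContinuousOn f' (Ioi 0) := hcont.mono Ioi_subset_Ici_self
  have hdiff : G hbar j - G hbar (j + 1)
      = hbar / 2 * -∫ s in Ioi 0, f' s * erlangDensity hbar (j + 1) s := by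
    rw [hG_erlang, hG_erlang, ← mul_sub,
      integral_mul_erlangDensity_sub_succ hbar_pos hderiv hB hf'c hf'_abs]
    ring
  refine ⟨by rw [hdiff, integral_comp_sq_mul_erlangDensity]; ring, ?_, ?_⟩
  · rw [hdiff]
    refine mul_nonneg (by positivity) (neg_nonneg.mpr (setIntegral_nonpos measurableSet_Ioi ?_))
    exact fun s hs => mul_nonpos_of_nonpos_of_nonneg (hhigh s (le_of_lt hs))
      (erlangDensity.nonneg hbar_pos _ (le_of_lt hs))
  · have hdecay := neg_integral_mul_erlangDensity_le hbar_pos hbar_le (by linarith) (by linarith)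
      (by positivity) (erlangDensity.integrableOn_bdd_mul hbar_pos hf'c hf'_abs (j + 1)) hlow'
    calc G hbar j - G hbar (j + 1)
        ≤ hbar / 2 * (2 * C₀ * (8 ^ (ν + 1) * (j * hbar + 1 / 2) ^ (-(ν + 1)))) := by
          rw [hdiff]
          exact mul_le_mul_of_nonneg_left hdecay (by positivity)
      _ = _ := by ring
end
end

section
/- Let d ≥ 1, ħ > 0, and x, ξ ∈ ℝ^d. Define the coherent state φ : ℝ^d → ℂ by φ(y) = (πħ)^{−d/4} exp(−|y−x|²/(2ħ)) exp(i ξ·(y−x)/ħ). Then φ is an eigenfunction of the transport cost operator with eigenvalue dħ/2: for every y ∈ ℝ^d, (1/2)(|x−y|² + |ξ|²) φ(y) + i ħ ξ·∇φ(y) − (ħ²/2) Δφ(y) = (dħ/2) φ(y). -/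
/-!
Along a direction `v` the coherent state has logarithmic derivative
`s_v(y) = (i⟪ξ, v⟫ - ⟪y - x, v⟫) / ħ`, affine in `y` with slope `-⟪v, v⟫ / ħ`; hence
`∂_v φ = s_v φ` and `∂_v² φ = (s_v² - ‖v‖² / ħ) φ`. Taking for `v` the coordinate vectors, the cost
operator multiplies `φ` by `∑ᵢ (½(a² + k²) + iħ k s - (ħ²/2)(s² - 1/ħ))` with `a = yᵢ - xᵢ`,
`k = ξᵢ`, `s = (ik - a)/ħ`: the quadratic terms cancel and each coordinate contributes `ħ/2`.
-/

open scoped Real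

noncomputable section

open Complex

section WavePacket

variable {E : Type*} [NormedAddCommGroup E] [InnerProductSpace ℝ E]

def gaussianWavePacket (c : ℂ) (hbar : ℝ) (x ξ y : E) : ℂ :=
  c * exp (-((‖y - x‖ ^ 2 / (2 * hbar) : ℝ) : ℂ)) * exp (I * ((inner ℝ ξ (y - x) : ℝ) : ℂ) / hbar)

theorem hasFDerivAt_gaussianWavePacket (c : ℂ) (hbar : ℝ) (x ξ y : E) :
    HasFDerivAt (gaussianWavePacket c hbar x ξ)
      (gaussianWavePacket c hbar x ξ y • (hbar : ℂ)⁻¹ •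
        (I • ofRealCLM.comp (innerSL ℝ ξ) - ofRealCLM.comp (innerSL ℝ (y - x)))) y := by
  have hsub : HasFDerivAt (fun w : E => w - x) (.id ℝ E) y := (hasFDerivAt_id y).sub_const x
  have hquad : HasFDerivAt (fun w : E => ‖w - x‖ ^ 2 / (2 * hbar))
      (hbar⁻¹ • innerSL ℝ (y - x)) y :=
    (hsub.norm_sq.mul_const (2 * hbar)⁻¹).congr_fderiv (by
      ext v
      simp only [ContinuousLinearMap.comp_id, smul_apply, nsmul_eq_mul, Nat.cast_ofNat, smul_eq_mul]
      field_simp)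
  have hphase : HasFDerivAt (fun w : E => inner ℝ ξ (w - x)) (innerSL ℝ ξ) y :=
    (innerSL ℝ ξ).hasFDerivAt.comp y hsub
  have h := ((ofRealCLM.hasFDerivAt.comp y hquad).neg.cexp.const_mul c).mul
    ((((ofRealCLM.hasFDerivAt.comp y hphase).const_mul I).mul_const (hbar : ℂ)⁻¹).cexp)
  refine h.congr_fderiv ?_
  ext v
  simp only [add_apply, sub_apply, smul_apply, neg_apply, ContinuousLinearMap.comp_apply,
    Function.comp_apply, Pi.neg_apply, innerSL_apply_apply, ofRealCLM_apply, smul_eq_mul,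
    gaussianWavePacket, div_eq_mul_inv]
  push_cast
  ring

theorem fderiv_gaussianWavePacket_apply (c : ℂ) (hbar : ℝ) (x ξ y v : E) :
    fderiv ℝ (gaussianWavePacket c hbar x ξ) y v =
      gaussianWavePacket c hbar x ξ y * ((I * inner ℝ ξ v - inner ℝ (y - x) v) / hbar) := by
  rw [(hasFDerivAt_gaussianWavePacket c hbar x ξ y).fderiv]
  simp only [sub_apply, smul_apply, ContinuousLinearMap.comp_apply, innerSL_apply_apply,
    ofRealCLM_apply, smul_eq_mul]
  ring

theorem fderiv_fderiv_gaussianWavePacket_apply (c : ℂ) (hbar : ℝ) (x ξ y v : E) :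
    fderiv ℝ (fun w => fderiv ℝ (gaussianWavePacket c hbar x ξ) w v) y v =
      gaussianWavePacket c hbar x ξ y *
        (((I * inner ℝ ξ v - inner ℝ (y - x) v) / hbar) ^ 2 - ‖v‖ ^ 2 / hbar) := by
  have hslope : HasFDerivAt (fun w : E => (I * inner ℝ ξ v - inner ℝ (w - x) v) / (hbar : ℂ))
      (-(hbar : ℂ)⁻¹ • ofRealCLM.comp (innerSL ℝ v)) y := by
    have h := ((ofRealCLM.hasFDerivAt.comp y ((innerSL ℝ v).hasFDerivAt.comp y
      ((hasFDerivAt_id y).sub_const x))).const_sub (I * inner ℝ ξ v)).mul_const (hbar : ℂ)⁻¹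
    refine (h.congr_fderiv ?_).congr_of_eventuallyEq (.of_forall fun w => ?_)
    · ext u; simp
    · simp [real_inner_comm v, div_eq_mul_inv]
  simp only [fderiv_gaussianWavePacket_apply]
  rw [((hasFDerivAt_gaussianWavePacket c hbar x ξ y).fun_mul hslope).fderiv]
  simp only [add_apply, sub_apply, smul_apply, ContinuousLinearMap.comp_apply, innerSL_apply_apply,
    ofRealCLM_apply, smul_eq_mul, real_inner_self_eq_norm_sq]
  push_cast
  ring

end WavePacket

theorem cost_symbol_one_dim {h : ℂ} (h0 : h ≠ 0) (a k : ℂ) :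
    1 / 2 * (a ^ 2 + k ^ 2) + I * h * (k * ((I * k - a) / h)) -
      h ^ 2 / 2 * (((I * k - a) / h) ^ 2 - 1 / h) = h / 2 := by
  field_simp
  linear_combination k ^ 2 * I_sq

theorem coherent_state_cost_eigenfunction_general
    (d : ℕ) (hbar : ℝ) (hhbar : 0 < hbar)
    (x ξ : EuclideanSpace ℝ (Fin d))
    (φ : EuclideanSpace ℝ (Fin d) → ℂ)
    (hφ : ∀ y, φ y = (((π * hbar) ^ (-(d : ℝ) / 4) : ℝ) : ℂ) *
      Complex.exp (-((‖y - x‖ ^ 2 / (2 * hbar) : ℝ) : ℂ)) *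
      Complex.exp (Complex.I * ((inner ℝ ξ (y - x) : ℝ) : ℂ) / (hbar : ℂ))) :
    ∀ y : EuclideanSpace ℝ (Fin d),
      ((1 : ℂ) / 2) * (((‖x - y‖ ^ 2 + ‖ξ‖ ^ 2 : ℝ) : ℂ)) * φ y +
        Complex.I * (hbar : ℂ) *
          (∑ i : Fin d, ((ξ i : ℝ) : ℂ) * fderiv ℝ φ y (EuclideanSpace.single i (1 : ℝ))) -
        ((hbar : ℂ) ^ 2 / 2) *
          (∑ i : Fin d,
            fderiv ℝ (fun w => fderiv ℝ φ w (EuclideanSpace.single i (1 : ℝ))) y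
              (EuclideanSpace.single i (1 : ℝ)))
      = (((d : ℝ) * hbar / 2 : ℝ) : ℂ) * φ y := by
  intro y
  obtain rfl : φ = gaussianWavePacket _ hbar x ξ := funext hφ
  -- the second derivatives first, before `simp` rewrites the inner first derivative
  simp only [fderiv_fderiv_gaussianWavePacket_apply]
  simp only [fderiv_gaussianWavePacket_apply, EuclideanSpace.inner_single_right,
    PiLp.norm_single, EuclideanSpace.real_norm_sq_eq, PiLp.sub_apply, conj_trivial, one_mul,
    norm_one]
  have hsum : ((d : ℝ) * hbar / 2 : ℝ) = ∑ _i : Fin d, hbar / 2 := by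
    simp [mul_div_assoc]
  rw [hsum]
  push_cast
  simp only [Finset.mul_sum, Finset.sum_mul, ← Finset.sum_add_distrib, ← Finset.sum_sub_distrib]
  refine Finset.sum_congr rfl fun i _ => ?_
  linear_combination gaussianWavePacket _ hbar x ξ y *
    cost_symbol_one_dim (ofReal_ne_zero.2 hhbar.ne') (y i - x i) (ξ i)

/-- The coherent state
`φ(y) = (π hbar)^{−d/4} e^{−|y−x|²/(2 hbar)} e^{i ξ·(y−x)/hbar)` is an eigenfunction of the
transport cost operator `c_hbar(x,ξ) = ½(|x−y|² + |ξ|²) + i hbar ξ·∇ − (hbar²/2) Δ` with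
eigenvalue `d hbar / 2`. Here `ξ·∇φ(y) = ∑ᵢ ξᵢ ∂ᵢφ(y)` and `Δφ(y) = ∑ᵢ ∂ᵢ²φ(y)`, the
partial derivatives being taken along the coordinate directions of `ℝ^d`. -/
theorem coherent_state_cost_eigenfunction
    (d : ℕ) (hd : 1 ≤ d) (hbar : ℝ) (hhbar : 0 < hbar)
    (x ξ : EuclideanSpace ℝ (Fin d))
    (φ : EuclideanSpace ℝ (Fin d) → ℂ)
    (hφ : ∀ y, φ y = (((π * hbar) ^ (-(d : ℝ) / 4) : ℝ) : ℂ) *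
      Complex.exp (-((‖y - x‖ ^ 2 / (2 * hbar) : ℝ) : ℂ)) *
      Complex.exp (Complex.I * ((inner ℝ ξ (y - x) : ℝ) : ℂ) / (hbar : ℂ))) :
    ∀ y : EuclideanSpace ℝ (Fin d),
      ((1 : ℂ) / 2) * (((‖x - y‖ ^ 2 + ‖ξ‖ ^ 2 : ℝ) : ℂ)) * φ y +
        Complex.I * (hbar : ℂ) *
          (∑ i : Fin d, ((ξ i : ℝ) : ℂ) * fderiv ℝ φ y (EuclideanSpace.single i (1 : ℝ))) -
        ((hbar : ℂ) ^ 2 / 2) *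
          (∑ i : Fin d,
            fderiv ℝ (fun w => fderiv ℝ φ w (EuclideanSpace.single i (1 : ℝ))) y
              (EuclideanSpace.single i (1 : ℝ)))
      = (((d : ℝ) * hbar / 2 : ℝ) : ℂ) * φ y :=
  coherent_state_cost_eigenfunction_general d hbar hhbar x ξ φ hφ
end
end
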